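/- arXiv:1804.04239 — 3 statements merged into one kernel-verified Lean document; each statement's English description precedes it below -/
import Mathlib

section
/- For all positive reals x and y, 2x·log(x) + 2y·log(y) + 2xy/(x+y) ≤ 2(x+y)·log(x+y). -/
open Real

/-- The tangent-line bound `log t ≤ t - 1` at `t = x / s`, multiplied by `x`. -/
lemma mul_log_add_mul_sub_div_le {x s : ℝ} (hx : 0 < x) (hs : 0 < s) :
    x * log x + x * (s - x) / s ≤ x * log s := by
  have h := log_le_sub_one_of_pos (div_pos hx hs)
  rw [log_div hx.ne' hs.ne', div_sub_one hs.ne'] at h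
  have h' := mul_le_mul_of_nonneg_left h hx.le
  have : x * ((x - s) / s) = -(x * (s - x) / s) := by ring
  linarith [mul_sub x (log x) (log s)]

lemma mul_log_add_mul_log_add_le {x y : ℝ} (hx : 0 < x) (hy : 0 < y) :
    x * log x + y * log y + 2 * x * y / (x + y) ≤ (x + y) * log (x + y) := by
  have hs : 0 < x + y := add_pos hx hy
  have hx' := mul_log_add_mul_sub_div_le hx hs
  have hy' := mul_log_add_mul_sub_div_le hy hs
  have : x * (x + y - x) / (x + y) + y * (x + y - y) / (x + y) = 2 * x * y / (x + y) := by
    ring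
  linarith

theorem stmt_2 (x y : ℝ) (hx : 0 < x) (hy : 0 < y) :
    2 * x * Real.log x + 2 * y * Real.log y + 2 * x * y / (x + y)
      ≤ 2 * (x + y) * Real.log (x + y) := by
  have h := mul_log_add_mul_log_add_le hx hy
  have hpos : 0 ≤ 2 * x * y / (x + y) := by positivity
  linarith
end

section
/- Let X_1, ..., X_k be i.i.d. exponential random variables with rate 1, and let Z_i be the indicator of the event X_i ≥ max_j X_j - c for a fixed constant c > 0. Then E[Σ_i Z_i] = 1 + Σ_{i=1}^{k-1} (1 - e^{-c})^i, and in particular E[Σ_i Z_i] ≤ e^c. -/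
/-!
The count is `∑ᵢ 1_{Aᵢ}` with `Aᵢ = {∀ j, Xⱼ ≤ Xᵢ + c}`. Splitting off the coordinate `Xᵢ = y`,
the other `n = k - 1` coordinates are independent, so
`P(Aᵢ) = ∫₀^∞ e^{-y} (1 - e^{-c} e^{-y})ⁿ dy = (1 - (1 - e^{-c})ᵏ) / (k e^{-c})`.
Summing over `i` gives `(1 - (1 - e^{-c})ᵏ) / e^{-c}`, which is the geometric sum
`∑_{i<k} (1 - e^{-c})ⁱ` and at most `1 / e^{-c} = e^c`.
-/

open MeasureTheory ProbabilityTheory Real Set Filter Topology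
open scoped Classical ENNReal

lemma expMeasure_Iic {r t : ℝ} (hr : 0 < r) (ht : 0 ≤ t) :
    expMeasure r (Iic t) = ENNReal.ofReal (1 - exp (-(r * t))) := by
  have := isProbabilityMeasure_expMeasure hr
  rw [← ofReal_cdf, cdf_expMeasure_eq hr, if_pos ht]

lemma map_eq_expMeasure {Ω : Type*} [MeasurableSpace Ω] {μ : Measure Ω} [IsProbabilityMeasure μ]
    {Y : Ω → ℝ} {r : ℝ} (hr : 0 < r) (hY : Measurable Y)
    (htail : ∀ t, 0 ≤ t → μ {ω | t < Y ω} = ENNReal.ofReal (exp (-(r * t)))) :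
    μ.map Y = expMeasure r := by
  have := isProbabilityMeasure_expMeasure hr
  have := Measure.isProbabilityMeasure_map (μ := μ) hY.aemeasurable
  have hIic : ∀ t, 0 ≤ t → μ.map Y (Iic t) = expMeasure r (Iic t) := by
    intro t ht
    rw [expMeasure_Iic hr ht, ← compl_Ioi, prob_compl_eq_one_sub measurableSet_Ioi,
      Measure.map_apply hY measurableSet_Ioi, ENNReal.ofReal_sub _ (exp_pos _).le,
      ENNReal.ofReal_one]
    exact congrArg _ (htail t ht)
  have hIic_zero : expMeasure r (Iic 0) = 0 := by simp [expMeasure_Iic hr le_rfl]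
  refine Measure.ext_of_Iic _ _ fun t => ?_
  rcases le_or_gt 0 t with ht | ht
  · exact hIic t ht
  · have hsub : Iic t ⊆ Iic 0 := Iic_subset_Iic.2 ht.le
    rw [measure_mono_null hsub hIic_zero, measure_mono_null hsub (hIic 0 le_rfl ▸ hIic_zero)]

lemma lintegral_expMeasure {r : ℝ} {f : ℝ → ℝ≥0∞} (hf : Measurable f) :
    ∫⁻ y, f y ∂expMeasure r = ∫⁻ y in Ioi 0, ENNReal.ofReal (r * exp (-(r * y))) * f y := by
  have hsupp : (exponentialPDF r * f).support ⊆ Ici 0 := fun y hy => by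
    by_contra hneg
    exact hy (by simp [exponentialPDF_of_neg (not_le.1 hneg)])
  have hpdf : Measurable (exponentialPDF r) := (measurable_exponentialPDFReal r).ennreal_ofReal
  rw [show expMeasure r = volume.withDensity (exponentialPDF r) from rfl,
    lintegral_withDensity_eq_lintegral_mul _ hpdf hf,
    ← setLIntegral_eq_of_support_subset hsupp, setLIntegral_congr Ioi_ae_eq_Ici.symm]
  refine setLIntegral_congr_fun measurableSet_Ioi fun y hy => ?_
  simp only [Pi.mul_apply]
  rw [exponentialPDF_of_nonneg (le_of_lt hy)]

lemma one_sub_mul_exp_neg_nonneg {a y : ℝ} (ha1 : a ≤ 1) (hy : 0 ≤ y) :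
    0 ≤ 1 - a * exp (-y) := by
  nlinarith [exp_pos (-y), exp_le_one_iff.2 (neg_nonpos.2 hy)]

lemma lintegral_exp_neg_mul_one_sub_mul_exp_neg_pow {a : ℝ} (ha0 : 0 < a) (ha1 : a ≤ 1) (n : ℕ) :
    ∫⁻ y in Ioi 0, ENNReal.ofReal (exp (-y) * (1 - a * exp (-y)) ^ n)
      = ENNReal.ofReal ((1 - (1 - a) ^ (n + 1)) / ((n + 1) * a)) := by
  set g := fun y => (1 - a * exp (-y)) ^ (n + 1) / ((n + 1) * a)
  have hderiv : ∀ y, HasDerivAt g (exp (-y) * (1 - a * exp (-y)) ^ n) y := fun y => by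
    refine (((((hasDerivAt_neg y).exp.const_mul a).const_sub 1).pow (n + 1)).div_const
      ((n + 1) * a)).congr_deriv ?_
    push_cast
    field_simp
  have hnonneg : ∀ y ∈ Ioi (0 : ℝ), 0 ≤ exp (-y) * (1 - a * exp (-y)) ^ n := fun y hy =>
    have := one_sub_mul_exp_neg_nonneg ha1 hy.out.le; by positivity
  have hlim : Tendsto g atTop (𝓝 (1 / ((n + 1) * a))) := by
    have hcont : Continuous fun u : ℝ => (1 - a * u) ^ (n + 1) / ((n + 1) * a) := by fun_prop
    simpa [g, Function.comp_def] using (hcont.tendsto 0).comp tendsto_exp_neg_atTop_nhds_zero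
  have hg0 : ContinuousWithinAt g (Ici 0) 0 := (hderiv 0).continuousAt.continuousWithinAt
  rw [← ofReal_integral_eq_lintegral_ofReal
      (integrableOn_Ioi_deriv_of_nonneg hg0 (fun y _ => hderiv y) hnonneg hlim)
      ((ae_restrict_iff' measurableSet_Ioi).2 (ae_of_all _ hnonneg)),
    integral_Ioi_of_hasDerivAt_of_nonneg hg0 (fun y _ => hderiv y) hnonneg hlim]
  simp only [g, neg_zero, exp_zero, mul_one]
  field_simp

lemma lintegral_expMeasure_Iic_add_pow {c : ℝ} (hc : 0 ≤ c) (n : ℕ) :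
    ∫⁻ y, expMeasure 1 (Iic (y + c)) ^ n ∂expMeasure 1
      = ENNReal.ofReal ((1 - (1 - exp (-c)) ^ (n + 1)) / ((n + 1) * exp (-c))) := by
  have hmono : Monotone fun y => expMeasure 1 (Iic (y + c)) ^ n := fun y z hyz =>
    pow_le_pow_left' (measure_mono (Iic_subset_Iic.2 (by linarith))) n
  have ha1 : exp (-c) ≤ 1 := exp_le_one_iff.2 (by linarith)
  rw [lintegral_expMeasure hmono.measurable,
    ← lintegral_exp_neg_mul_one_sub_mul_exp_neg_pow (exp_pos (-c)) ha1 n]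
  refine setLIntegral_congr_fun measurableSet_Ioi fun y (hy : 0 < y) => ?_
  have hsplit : exp (-(1 * (y + c))) = exp (-c) * exp (-y) := by
    rw [one_mul, neg_add, exp_add, mul_comm]
  rw [expMeasure_Iic one_pos (by linarith), hsplit,
    ← ENNReal.ofReal_pow (one_sub_mul_exp_neg_nonneg ha1 hy.le),
    ← ENNReal.ofReal_mul (by positivity)]
  simp only [one_mul]

lemma measurableSet_setOf_forall_le_add {n : ℕ} (i : Fin n) (c : ℝ) :
    MeasurableSet {x : Fin n → ℝ | ∀ j, x j ≤ x i + c} := by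
  simp only [ofPred_forall]
  exact .iInter fun j => measurableSet_le (by fun_prop) (by fun_prop)

lemma pi_setOf_forall_le_add_eq_lintegral (ν : Measure ℝ) [SigmaFinite ν] {c : ℝ} (hc : 0 ≤ c)
    {n : ℕ} (i : Fin (n + 1)) :
    Measure.pi (fun _ => ν) {x | ∀ j, x j ≤ x i + c} = ∫⁻ y, ν (Iic (y + c)) ^ n ∂ν := by
  set T : Set (ℝ × (Fin n → ℝ)) := {p | ∀ j, p.2 j ≤ p.1 + c}
  have hT : MeasurableSet T := by
    simp only [T, ofPred_forall]
    exact .iInter fun j => measurableSet_le (by fun_prop) (by fun_prop)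
  have hpre : {x : Fin (n + 1) → ℝ | ∀ j, x j ≤ x i + c}
      = MeasurableEquiv.piFinSuccAbove (fun _ => ℝ) i ⁻¹' T := by
    ext x
    simp [T, Fin.forall_iff_succAbove i, hc, Fin.removeNth]
  have hsection : ∀ y, Prod.mk y ⁻¹' T = univ.pi fun _ => Iic (y + c) := fun y => by
    ext z; simp [T, Pi.le_def]
  rw [hpre, (measurePreserving_piFinSuccAbove (fun _ => ν) i).measure_preimage_equiv,
    Measure.prod_apply hT]
  simp_rw [hsection, Measure.pi_pi, Finset.prod_const, Finset.card_univ, Fintype.card_fin]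

lemma map_eq_pi_expMeasure {Ω : Type*} [MeasurableSpace Ω] {μ : Measure Ω}
    [IsProbabilityMeasure μ] {n : ℕ} {X : Fin n → Ω → ℝ} (hmeas : ∀ i, Measurable (X i))
    (hindep : iIndepFun X μ)
    (hdist : ∀ i, ∀ t : ℝ, 0 ≤ t → μ {ω | t < X i ω} = ENNReal.ofReal (exp (-t))) :
    μ.map (fun ω j => X j ω) = Measure.pi fun _ => expMeasure 1 := by
  rw [hindep.map_fun_eq_pi_map fun i => (hmeas i).aemeasurable]
  exact congrArg Measure.pi <| funext fun i =>
    map_eq_expMeasure one_pos (hmeas i) (by simpa using hdist i)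

lemma measureReal_forall_le_add_of_map_eq_pi_expMeasure {Ω : Type*} [MeasurableSpace Ω]
    {μ : Measure Ω} {n : ℕ} {X : Fin (n + 1) → Ω → ℝ} (hmeas : ∀ i, Measurable (X i))
    (hlaw : μ.map (fun ω j => X j ω) = Measure.pi fun _ => expMeasure 1)
    {c : ℝ} (hc : 0 ≤ c) (i : Fin (n + 1)) :
    μ.real {ω | ∀ j, X j ω ≤ X i ω + c}
      = (1 - (1 - exp (-c)) ^ (n + 1)) / ((n + 1) * exp (-c)) := by
  have := isProbabilityMeasure_expMeasure one_pos
  have ha1 : exp (-c) ≤ 1 := exp_le_one_iff.2 (by linarith)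
  have hpow : (1 - exp (-c)) ^ (n + 1) ≤ 1 :=
    pow_le_one₀ (by linarith) (by linarith [exp_pos (-c)])
  have hpre : {ω | ∀ j, X j ω ≤ X i ω + c}
      = (fun ω j => X j ω) ⁻¹' {x | ∀ j, x j ≤ x i + c} := rfl
  rw [hpre, measureReal_def, ← Measure.map_apply (measurable_pi_lambda _ hmeas)
      (measurableSet_setOf_forall_le_add i c), hlaw, pi_setOf_forall_le_add_eq_lintegral _ hc,
    lintegral_expMeasure_Iic_add_pow hc,
    ENNReal.toReal_ofReal (div_nonneg (by linarith) (by positivity))]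

lemma integral_card_filter {Ω ι : Type*} [MeasurableSpace Ω] {μ : Measure Ω} [IsFiniteMeasure μ]
    [Fintype ι] (P : ι → Ω → Prop) [∀ i ω, Decidable (P i ω)]
    (hP : ∀ i, MeasurableSet {ω | P i ω}) :
    ∫ ω, ((Finset.univ.filter fun i => P i ω).card : ℝ) ∂μ = ∑ i, μ.real {ω | P i ω} := by
  have hind : ∀ ω, ((Finset.univ.filter fun i => P i ω).card : ℝ)
      = ∑ i, {ω | P i ω}.indicator 1 ω := fun ω => by
    simp [indicator_apply]
  simp_rw [hind]
  rw [integral_finsetSum _ fun i _ => (integrable_const 1).indicator (hP i)]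
  simp_rw [integral_indicator_one (hP _)]

lemma one_add_sum_Icc_pow {K : Type*} [DivisionRing K] {q : K} (hq : q ≠ 1) (n : ℕ) :
    1 + ∑ i ∈ Finset.Icc 1 n, q ^ i = (1 - q ^ (n + 1)) / (1 - q) := by
  have hsplit : ∑ i ∈ Finset.range (n + 1), q ^ i = 1 + ∑ i ∈ Finset.Icc 1 n, q ^ i := by
    rw [Finset.range_eq_Ico, Finset.sum_eq_sum_Ico_succ_bot n.succ_pos, pow_zero]
    rfl
  rw [← hsplit, geom_sum_eq hq, ← neg_sub 1 q, ← neg_sub 1 (q ^ (n + 1)), neg_div_neg_eq]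

/-- For i.i.d. `Exp(1)` variables `X₁, …, X_k` and `Zᵢ` the indicator of
`Xᵢ ≥ maxⱼ Xⱼ - c`, we have `E[∑ᵢ Zᵢ] = 1 + ∑_{i=1}^{k-1} (1 - e^{-c})^i ≤ e^c`. -/
theorem stmt_4 {Ω : Type*} [MeasurableSpace Ω] (μ : Measure Ω) [IsProbabilityMeasure μ]
    (k : ℕ) (hk : 0 < k) (c : ℝ) (hc : 0 < c)
    (X : Fin k → Ω → ℝ)
    (hmeas : ∀ i, Measurable (X i))
    (hindep : iIndepFun X μ)
    (hdist : ∀ i, ∀ t : ℝ, 0 ≤ t → μ {ω | t < X i ω} = ENNReal.ofReal (Real.exp (-t))) :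
    (∫ ω, ((Finset.univ.filter (fun i : Fin k =>
          Finset.univ.sup' ⟨⟨0, hk⟩, Finset.mem_univ _⟩ (fun j => X j ω) - c ≤ X i ω)).card : ℝ) ∂μ)
        = 1 + ∑ i ∈ Finset.Icc 1 (k - 1), (1 - Real.exp (-c)) ^ i ∧
    (∫ ω, ((Finset.univ.filter (fun i : Fin k =>
          Finset.univ.sup' ⟨⟨0, hk⟩, Finset.mem_univ _⟩ (fun j => X j ω) - c ≤ X i ω)).card : ℝ) ∂μ)
        ≤ Real.exp c := by
  obtain ⟨n, rfl⟩ : ∃ n, k = n + 1 := ⟨k - 1, by omega⟩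
  have ha1 : exp (-c) ≤ 1 := exp_le_one_iff.2 (by linarith)
  have hlaw := map_eq_pi_expMeasure hmeas hindep hdist
  have hevent : ∀ i ω, Finset.univ.sup' ⟨⟨0, hk⟩, Finset.mem_univ _⟩ (fun j => X j ω) - c ≤ X i ω
      ↔ ∀ j, X j ω ≤ X i ω + c := fun i ω => by
    rw [sub_le_iff_le_add]
    exact (Finset.sup'_le_iff _ _).trans (by simp)
  have hsum : ((n + 1 : ℕ) : ℝ) * ((1 - (1 - exp (-c)) ^ (n + 1)) / ((n + 1) * exp (-c)))
      = (1 - (1 - exp (-c)) ^ (n + 1)) / (1 - (1 - exp (-c))) := by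
    rw [sub_sub_cancel]
    push_cast
    field_simp
  rw [integral_card_filter _ fun i => by
    simp_rw [hevent]; exact measurable_pi_lambda _ hmeas (measurableSet_setOf_forall_le_add i c)]
  simp_rw [hevent, measureReal_forall_le_add_of_map_eq_pi_expMeasure hmeas hlaw hc.le,
    Finset.sum_const, Finset.card_univ, Fintype.card_fin, nsmul_eq_mul, hsum, Nat.add_sub_cancel]
  refine ⟨(one_add_sum_Icc_pow (by linarith [exp_pos (-c)]) n).symm, ?_⟩
  rw [sub_sub_cancel, div_le_iff₀ (exp_pos _), ← exp_add, add_neg_cancel, exp_zero]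
  linarith [pow_nonneg (sub_nonneg.2 ha1) (n + 1)]
end

section
/- For natural numbers Δ ≥ 0, d with d > 2Δ, d+1 ≤ n, and n ≥ 2: (binomial(d+1, Δ+1)) · (1 - (d-Δ)/(d+1))^{10(Δ+1)·log n} ≤ n^{-4}. -/
/-!
The base equals `(Δ + 1) / (d + 1) ≤ 1 / 2`, and `(1 / 2) ^ (2 c log n) = n ^ (-2 c log 2) ≤ n ^ (-c)`
because `2 log 2 ≥ 1`. With `c = 5 (Δ + 1)` this beats `binomial(d + 1, Δ + 1) ≤ n ^ (Δ + 1)`,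
leaving `n ^ (-4 (Δ + 1)) ≤ n ^ (-4)`.
-/

open Real

lemma Nat.choose_le_pow_of_le {m n : ℕ} (k : ℕ) (h : m ≤ n) : m.choose k ≤ n ^ k :=
  (Nat.choose_le_pow m k).trans (Nat.pow_le_pow_left h k)

lemma Real.rpow_two_mul_log_le_rpow_neg {x c y : ℝ} (hx₀ : 0 ≤ x) (hx : x ≤ 1 / 2) (hc : 0 ≤ c)
    (hy : 1 ≤ y) : x ^ (2 * c * log y) ≤ y ^ (-c) := by
  have hy₀ : 0 < y := one_pos.trans_le hy
  have hlog : 0 ≤ 2 * c * log y := by have := log_nonneg hy; positivity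
  have hhalf : (1 / 2 : ℝ) ^ (2 * c * log y) = y ^ (-(2 * log 2 * c)) := by
    rw [rpow_def_of_pos (by norm_num), rpow_def_of_pos hy₀, one_div, log_inv]
    ring_nf
  calc x ^ (2 * c * log y) ≤ (1 / 2 : ℝ) ^ (2 * c * log y) := rpow_le_rpow hx₀ hx hlog
    _ = y ^ (-(2 * log 2 * c)) := hhalf
    _ ≤ y ^ (-c) := by
      apply rpow_le_rpow_of_exponent_le hy
      nlinarith [log_two_gt_d9]

lemma one_sub_sub_div_add_one (a b : ℝ) (hb : b + 1 ≠ 0) :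
    1 - (b - a) / (b + 1) = (a + 1) / (b + 1) := by
  field_simp
  ring

theorem stmt_17 (Δ d n : ℕ) (hdΔ : 2 * Δ < d) (hdn : d + 1 ≤ n) (hn : 2 ≤ n) :
    ((d + 1).choose (Δ + 1) : ℝ) *
      (1 - ((d : ℝ) - (Δ : ℝ)) / ((d : ℝ) + 1)) ^ (10 * ((Δ : ℝ) + 1) * Real.log n)
      ≤ (n : ℝ) ^ (-4 : ℝ) := by
  have hn₁ : (1 : ℝ) ≤ n := by exact_mod_cast one_le_two.trans hn
  have hn₀ : (0 : ℝ) < n := one_pos.trans_le hn₁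
  have hdΔ' : 2 * (Δ : ℝ) + 1 ≤ d := by exact_mod_cast hdΔ
  have hchoose : ((d + 1).choose (Δ + 1) : ℝ) ≤ (n : ℝ) ^ ((Δ : ℝ) + 1) := by
    rw [← Nat.cast_succ, rpow_natCast]
    exact_mod_cast Nat.choose_le_pow_of_le (Δ + 1) hdn
  have hbase : ((Δ : ℝ) + 1) / ((d : ℝ) + 1) ≤ 1 / 2 := by
    rw [div_le_div_iff₀ (by positivity) two_pos]
    linarith
  have hpow : (((Δ : ℝ) + 1) / (d + 1)) ^ (10 * ((Δ : ℝ) + 1) * log n)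
      ≤ (n : ℝ) ^ (-(5 * ((Δ : ℝ) + 1))) := by
    rw [show 10 * ((Δ : ℝ) + 1) = 2 * (5 * (Δ + 1)) by ring]
    exact rpow_two_mul_log_le_rpow_neg (by positivity) hbase (by positivity) hn₁
  rw [one_sub_sub_div_add_one _ _ (by positivity)]
  calc ((d + 1).choose (Δ + 1) : ℝ) * (((Δ : ℝ) + 1) / (d + 1)) ^ (10 * ((Δ : ℝ) + 1) * log n)
      ≤ (n : ℝ) ^ ((Δ : ℝ) + 1) * (n : ℝ) ^ (-(5 * ((Δ : ℝ) + 1))) :=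
        mul_le_mul hchoose hpow (by positivity) (by positivity)
    _ = (n : ℝ) ^ (-4 * ((Δ : ℝ) + 1)) := by rw [← rpow_add hn₀]; ring_nf
    _ ≤ (n : ℝ) ^ (-4 : ℝ) :=
      rpow_le_rpow_of_exponent_le hn₁ (by linarith [Nat.cast_nonneg (α := ℝ) Δ])
end
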